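/- arXiv:2411.07166 — 2 statements merged into one kernel-verified Lean document; each statement's English description precedes it below -/
import Mathlib

section
/- An index I satisfies additivity, reasonable lower bound, equal global impact of users, order preservation, and non-unilateral manipulability if and only if there exists, for each finite set of artists N, a positive real number λ_N such that for every streaming problem (N, M, t) and every i ∈ N, I_i(N, M, t) = λ_N · Sh_i(N, M, t); in particular, the associated reward rule of such an I coincides with the Shapley index. -/
open Finset

/-- A streaming problem: a finite nonempty set `N` of artists, a finite nonempty set
`M` of users, and a streams matrix `t` such that every user streamed some content. -/
structure StreamingProblem where
  N : Finset ℕ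
  M : Finset ℕ
  t : ℕ → ℕ → ℕ
  N_nonempty : N.Nonempty
  M_nonempty : M.Nonempty
  streams_pos : ∀ j ∈ M, 0 < ∑ i ∈ N, t i j

namespace StreamingProblem

/-- `L^j` : the set of artists streamed by user `j`. -/
def Lset (P : StreamingProblem) (j : ℕ) : Finset ℕ :=
  P.N.filter fun i => 0 < P.t i j

/-- `F_i` : the set of fans of artist `i`. -/
def Fset (P : StreamingProblem) (i : ℕ) : Finset ℕ :=
  P.M.filter fun j => 0 < P.t i j

/-- The Shapley index: `Sh_i(N,M,t) = ∑_{j ∈ M : t_{ij} > 0} 1 / |L^j|`. -/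
noncomputable def Sh (P : StreamingProblem) (i : ℕ) : ℝ :=
  ∑ j ∈ P.M.filter (fun j => 0 < P.t i j), (1 : ℝ) / ((P.Lset j).card : ℝ)

end StreamingProblem

open StreamingProblem

/-- Additivity of an index. -/
def AdditiveIndex (I : StreamingProblem → ℕ → ℝ) : Prop :=
  ∀ P P₁ P₂ : StreamingProblem,
    P₁.N = P.N → P₂.N = P.N →
    P.M = P₁.M ∪ P₂.M → Disjoint P₁.M P₂.M →
    (∀ i ∈ P.N, ∀ j ∈ P₁.M, P.t i j = P₁.t i j) →
    (∀ i ∈ P.N, ∀ j ∈ P₂.M, P.t i j = P₂.t i j) →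
    ∀ i ∈ P.N, I P i = I P₁ i + I P₂ i

/-- Reasonable lower bound of an index. -/
def ReasonableLowerBound (I : StreamingProblem → ℕ → ℝ) : Prop :=
  ∀ P : StreamingProblem, ∀ C ⊆ P.M,
    (C.card : ℝ) ≤
      (∑ i ∈ P.N.filter (fun i => ∃ j ∈ C, 0 < P.t i j), I P i) * (P.M.card : ℝ) /
        ∑ k ∈ P.N, I P k

/-- Equal global impact of users of an index. -/
def EqualGlobalImpactUsers (I : StreamingProblem → ℕ → ℝ) : Prop :=
  ∀ P Q Q' : StreamingProblem, ∀ j ∈ P.M, ∀ j' ∈ P.M, j ≠ j' →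
    Q.N = P.N → Q.M = P.M.erase j → Q.t = P.t →
    Q'.N = P.N → Q'.M = P.M.erase j' → Q'.t = P.t →
    ∑ i ∈ Q.N, I Q i = ∑ i ∈ Q'.N, I Q' i

/-- Symmetry on fans of an index. -/
def SymmetryOnFans (I : StreamingProblem → ℕ → ℝ) : Prop :=
  ∀ P : StreamingProblem, ∀ i ∈ P.N, ∀ i' ∈ P.N,
    P.Fset i = P.Fset i' → I P i = I P i'

/-- Order preservation of an index. -/
def OrderPreservation (I : StreamingProblem → ℕ → ℝ) : Prop :=
  ∀ P : StreamingProblem, ∀ i ∈ P.N, ∀ i' ∈ P.N,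
    (∀ j ∈ P.M, P.t i j ≤ P.t i' j) → I P i ≤ I P i'

/-- Non-unilateral manipulability of an index. -/
def NonUnilateralManipulability (I : StreamingProblem → ℕ → ℝ) : Prop :=
  ∀ P P' : StreamingProblem, ∀ i ∈ P.N,
    P'.N = P.N → P'.M = P.M →
    P.Fset i = P'.Fset i →
    (∀ j ∈ P.M, P.t i j ≤ P'.t i j) →
    (∀ k ∈ P.N, k ≠ i → ∀ j ∈ P.M, P.t k j = P'.t k j) →
    I P' i ≤ I P i

/-- Null artists axiom of an index. -/
def NullArtists (I : StreamingProblem → ℕ → ℝ) : Prop :=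
  ∀ P : StreamingProblem, ∀ i ∈ P.N, (∑ j ∈ P.M, P.t i j) = 0 → I P i = 0

/-- Equal impact of artists of an index. -/
def EqualImpactArtists (I : StreamingProblem → ℕ → ℝ) : Prop :=
  ∀ P Q Q' : StreamingProblem, ∀ i ∈ P.N, ∀ i' ∈ P.N, i ≠ i' →
    Q.N = P.N.erase i' → Q.M = P.M → Q.t = P.t →
    Q'.N = P.N.erase i → Q'.M = P.M → Q'.t = P.t →
    I P i - I Q i = I P i' - I Q' i'

/-- An index assigns nonnegative reals to the artists, with positive total sum. -/
def IsIndex (I : StreamingProblem → ℕ → ℝ) : Prop :=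
  ∀ P : StreamingProblem, (∀ i ∈ P.N, 0 ≤ I P i) ∧ 0 < ∑ i ∈ P.N, I P i

/-- The reward rule `R^I` associated with an index `I`. -/
noncomputable def Reward (I : StreamingProblem → ℕ → ℝ) (P : StreamingProblem) (i : ℕ) : ℝ :=
  I P i * (P.M.card : ℝ) / ∑ k ∈ P.N, I P k


/-!
Additivity reduces everything to single-user problems. Equal global impact of users makes the
total worth `σ(N)` (`singleUserTotal`) of a single-user problem independent of the user and of
the streams, and the reasonable lower bound with `C = M` gives nothing to the artists who are not
streamed. Among the streamed artists, order preservation gives a most-streamed one at least the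
average `σ(N) / |L^j|`; non-unilateral manipulability passes this bound on to any streamed
artist, whose worth can only drop when its streams are raised to the top. As the worths add up
to `σ(N)`, every streamed artist gets exactly `σ(N) / |L^j| = σ(N) · Sh_i`.

Conversely `λ_N · Sh` satisfies the five axioms, and its reward rule is `Sh` because
`∑ i, Sh_i = |M|`.
-/

namespace StreamingProblem

lemma Lset_nonempty (P : StreamingProblem) {j : ℕ} (hj : j ∈ P.M) : (P.Lset j).Nonempty := by
  obtain ⟨i, hi, hne⟩ := exists_ne_zero_of_sum_ne_zero (P.streams_pos j hj).ne'
  exact ⟨i, mem_filter.2 ⟨hi, Nat.pos_of_ne_zero hne⟩⟩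

lemma card_Lset_pos (P : StreamingProblem) {j : ℕ} (hj : j ∈ P.M) :
    (0 : ℝ) < (P.Lset j).card := by
  exact_mod_cast (P.Lset_nonempty hj).card_pos

noncomputable def share (P : StreamingProblem) (i j : ℕ) : ℝ :=
  if 0 < P.t i j then 1 / ((P.Lset j).card : ℝ) else 0

lemma share_nonneg (P : StreamingProblem) (i j : ℕ) : 0 ≤ P.share i j := by
  unfold share; split_ifs <;> positivity

lemma Sh_eq_sum_share (P : StreamingProblem) (i : ℕ) : P.Sh i = ∑ j ∈ P.M, P.share i j := by
  rw [Sh, sum_filter]; rfl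

lemma Sh_of_M_eq_singleton (P : StreamingProblem) {j : ℕ} (hP : P.M = {j}) (i : ℕ) :
    P.Sh i = P.share i j := by
  rw [Sh_eq_sum_share, hP, sum_singleton]

lemma share_congr {P Q : StreamingProblem} {i j : ℕ} (hN : Q.N = P.N)
    (hpos : ∀ k ∈ P.N, 0 < Q.t k j ↔ 0 < P.t k j) (hi : i ∈ P.N) :
    Q.share i j = P.share i j := by
  have hL : Q.Lset j = P.Lset j := by rw [Lset, Lset, hN]; exact filter_congr hpos
  simp only [share, hL, hpos i hi]

lemma sum_share_of_Lset_subset (P : StreamingProblem) {j : ℕ} (hj : j ∈ P.M) {S : Finset ℕ}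
    (hLS : P.Lset j ⊆ S) (hSN : S ⊆ P.N) : ∑ i ∈ S, P.share i j = 1 := by
  have hc := P.card_Lset_pos hj
  have hzero : ∀ i ∈ S, i ∉ P.Lset j → P.share i j = 0 := fun i hiS hiL =>
    if_neg fun hpos => hiL (mem_filter.2 ⟨hSN hiS, hpos⟩)
  have hL : ∀ i ∈ P.Lset j, P.share i j = 1 / (P.Lset j).card := fun i hi =>
    if_pos (mem_filter.1 hi).2
  rw [← sum_subset hLS hzero, sum_congr rfl hL, sum_const, nsmul_eq_mul]
  field_simp

lemma sum_Sh (P : StreamingProblem) : ∑ i ∈ P.N, P.Sh i = P.M.card := by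
  simp_rw [Sh_eq_sum_share]
  rw [sum_comm, sum_congr rfl fun j hj => P.sum_share_of_Lset_subset hj (filter_subset _ _) le_rfl]
  simp

lemma card_le_sum_Sh (P : StreamingProblem) {C : Finset ℕ} (hC : C ⊆ P.M) :
    (C.card : ℝ) ≤ ∑ i ∈ P.N.filter (fun i => ∃ j ∈ C, 0 < P.t i j), P.Sh i := by
  set NC := P.N.filter (fun i => ∃ j ∈ C, 0 < P.t i j)
  have hLNC : ∀ j ∈ C, P.Lset j ⊆ NC := fun j hj i hi =>
    mem_filter.2 ⟨(mem_filter.1 hi).1, j, hj, (mem_filter.1 hi).2⟩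
  calc (C.card : ℝ) = ∑ j ∈ C, ∑ i ∈ NC, P.share i j := by
        rw [sum_congr rfl fun j hj =>
          P.sum_share_of_Lset_subset (hC hj) (hLNC j hj) (filter_subset _ _)]
        simp
    _ = ∑ i ∈ NC, ∑ j ∈ C, P.share i j := sum_comm
    _ ≤ ∑ i ∈ NC, P.Sh i := sum_le_sum fun i _ => by
        rw [Sh_eq_sum_share]
        exact sum_le_sum_of_subset_of_nonneg hC fun j _ _ => P.share_nonneg i j

lemma Sh_le_Sh (P : StreamingProblem) {i i' : ℕ} (hle : ∀ j ∈ P.M, P.t i j ≤ P.t i' j) :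
    P.Sh i ≤ P.Sh i' := by
  rw [Sh, Sh]
  refine sum_le_sum_of_subset_of_nonneg (fun j hj => ?_) fun j _ _ => by positivity
  obtain ⟨hjM, hpos⟩ := mem_filter.1 hj
  exact mem_filter.2 ⟨hjM, hpos.trans_le (hle j hjM)⟩

lemma Sh_eq_Sh_of_Fset_eq {P P' : StreamingProblem} {i : ℕ} (hi : i ∈ P.N) (hN : P'.N = P.N)
    (hM : P'.M = P.M) (hF : P.Fset i = P'.Fset i)
    (hother : ∀ k ∈ P.N, k ≠ i → ∀ j ∈ P.M, P.t k j = P'.t k j) :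
    P'.Sh i = P.Sh i := by
  rw [Sh_eq_sum_share, Sh_eq_sum_share, hM]
  refine sum_congr rfl fun j hj => share_congr hN (fun k hk => ?_) hi
  by_cases hki : k = i
  · subst hki
    have := congrArg (j ∈ ·) hF
    simp only [Fset, mem_filter, hM, hj, true_and] at this
    exact (Iff.of_eq this).symm
  · rw [hother k hk hki j hj]

lemma Sh_add {P P₁ P₂ : StreamingProblem} (h₁ : P₁.N = P.N) (h₂ : P₂.N = P.N)
    (hM : P.M = P₁.M ∪ P₂.M) (hd : Disjoint P₁.M P₂.M)
    (ht₁ : ∀ i ∈ P.N, ∀ j ∈ P₁.M, P.t i j = P₁.t i j)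
    (ht₂ : ∀ i ∈ P.N, ∀ j ∈ P₂.M, P.t i j = P₂.t i j) {i : ℕ} (hi : i ∈ P.N) :
    P.Sh i = P₁.Sh i + P₂.Sh i := by
  rw [Sh_eq_sum_share, Sh_eq_sum_share, Sh_eq_sum_share, hM, sum_union hd]
  congr 1
  · exact sum_congr rfl fun j hj => (share_congr h₁ (fun k hk => by rw [ht₁ k hk j hj]) hi).symm
  · exact sum_congr rfl fun j hj => (share_congr h₂ (fun k hk => by rw [ht₂ k hk j hj]) hi).symm

def restrict (P : StreamingProblem) (S : Finset ℕ) (hS : S.Nonempty) (hSM : S ⊆ P.M) :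
    StreamingProblem where
  N := P.N
  M := S
  t := P.t
  N_nonempty := P.N_nonempty
  M_nonempty := hS
  streams_pos j hj := P.streams_pos j (hSM hj)

def glue (P Q : StreamingProblem) (hN : Q.N = P.N) : StreamingProblem where
  N := P.N
  M := P.M ∪ Q.M
  t i j := if j ∈ P.M then P.t i j else Q.t i j
  N_nonempty := P.N_nonempty
  M_nonempty := P.M_nonempty.mono subset_union_left
  streams_pos j hj := by
    by_cases hjP : j ∈ P.M
    · simpa only [if_pos hjP] using P.streams_pos j hjP
    · simpa only [if_neg hjP, ← hN] using Q.streams_pos j ((mem_union.1 hj).resolve_left hjP)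

lemma glue_t_of_mem_left (P Q : StreamingProblem) (hN : Q.N = P.N) {i j : ℕ} (hj : j ∈ P.M) :
    (P.glue Q hN).t i j = P.t i j :=
  if_pos hj

lemma glue_t_of_mem_right (P Q : StreamingProblem) (hN : Q.N = P.N) (hd : Disjoint P.M Q.M)
    {i j : ℕ} (hj : j ∈ Q.M) : (P.glue Q hN).t i j = Q.t i j :=
  if_neg (disjoint_right.1 hd hj)

def unit (N : Finset ℕ) (hN : N.Nonempty) (j : ℕ) : StreamingProblem where
  N := N
  M := {j}
  t _ _ := 1
  N_nonempty := hN
  M_nonempty := singleton_nonempty j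
  streams_pos _ _ := by simpa using hN.card_pos

def boost (P : StreamingProblem) (k d : ℕ) : StreamingProblem where
  N := P.N
  M := P.M
  t i j := if i = k then P.t i j + d else P.t i j
  N_nonempty := P.N_nonempty
  M_nonempty := P.M_nonempty
  streams_pos j hj := (P.streams_pos j hj).trans_le (sum_le_sum fun i _ => by split_ifs <;> omega)

lemma boost_Lset (P : StreamingProblem) {k j : ℕ} (d : ℕ) (hk : 0 < P.t k j) :
    (P.boost k d).Lset j = P.Lset j :=
  filter_congr fun i _ => by
    by_cases hik : i = k
    · subst hik; simp [boost, hk]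
    · simp [boost, hik]

lemma boost_Fset (P : StreamingProblem) {k : ℕ} (d : ℕ) (hk : ∀ j ∈ P.M, 0 < P.t k j) :
    (P.boost k d).Fset k = P.Fset k :=
  filter_congr fun j hj => by simp [boost, hk j hj, Nat.add_pos_left (hk j hj)]

end StreamingProblem

open StreamingProblem

variable {I : StreamingProblem → ℕ → ℝ}

/-- Glue a fresh user onto `P`: the result splits both as `P` plus that user and as `Q` plus that
user. -/
lemma AdditiveIndex.apply_congr (hAdd : AdditiveIndex I) {P Q : StreamingProblem}
    (hN : Q.N = P.N) (hM : Q.M = P.M) (ht : ∀ i ∈ P.N, ∀ j ∈ P.M, Q.t i j = P.t i j) :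
    ∀ i ∈ P.N, I Q i = I P i := by
  obtain ⟨j₀, hj₀⟩ := Infinite.exists_notMem_finset P.M
  set R := unit P.N P.N_nonempty j₀
  have hd : Disjoint P.M R.M := disjoint_singleton_right.2 hj₀
  intro i hi
  have hP := hAdd (P.glue R rfl) P R rfl rfl rfl hd
    (fun _ _ _ hj => glue_t_of_mem_left _ _ _ hj) (fun _ _ _ hj => glue_t_of_mem_right _ _ _ hd hj)
    i hi
  have hQ := hAdd (P.glue R rfl) Q R hN rfl (by rw [hM]; rfl) (hM ▸ hd)
    (fun k hk j hj => by rw [ht k hk j (hM ▸ hj)]; exact glue_t_of_mem_left _ _ _ (hM ▸ hj))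
    (fun _ _ _ hj => glue_t_of_mem_right _ _ _ hd hj) i hi
  linarith

lemma AdditiveIndex.eq_of_card_M_eq_one {J : StreamingProblem → ℕ → ℝ} (hI : AdditiveIndex I)
    (hJ : AdditiveIndex J) (h : ∀ P : StreamingProblem, P.M.card = 1 → ∀ i ∈ P.N, I P i = J P i)
    (P : StreamingProblem) : ∀ i ∈ P.N, I P i = J P i := by
  suffices ∀ n, ∀ P : StreamingProblem, P.M.card = n + 1 → ∀ i ∈ P.N, I P i = J P i from
    this _ P (Nat.succ_pred_eq_of_pos P.M_nonempty.card_pos).symm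
  intro n
  induction n with
  | zero => exact h
  | succ n ih =>
    intro P hcard i hi
    obtain ⟨j, hj⟩ := P.M_nonempty
    have hcard' : (P.M.erase j).card = n + 1 := by rw [card_erase_of_mem hj, hcard]; rfl
    set P₁ := P.restrict (P.M.erase j) (card_pos.1 (by omega)) (erase_subset _ _)
    set P₂ := P.restrict {j} (singleton_nonempty j) (singleton_subset_iff.2 hj)
    have hM : P.M = P₁.M ∪ P₂.M := (erase_union_eq j P.M hj).symm
    have hd : Disjoint P₁.M P₂.M := disjoint_singleton_right.2 (notMem_erase j _)
    rw [hI P P₁ P₂ rfl rfl hM hd (fun _ _ _ _ => rfl) (fun _ _ _ _ => rfl) i hi,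
      hJ P P₁ P₂ rfl rfl hM hd (fun _ _ _ _ => rfl) (fun _ _ _ _ => rfl) i hi,
      ih P₁ hcard' i hi, h P₂ (card_singleton j) i hi]

lemma sum_apply_eq_of_M_eq_singleton (hAdd : AdditiveIndex I) (hEGI : EqualGlobalImpactUsers I)
    {P Q : StreamingProblem} {j j' : ℕ} (hN : Q.N = P.N) (hP : P.M = {j}) (hQ : Q.M = {j'})
    (hne : j ≠ j') : ∑ i ∈ Q.N, I Q i = ∑ i ∈ P.N, I P i := by
  set G := P.glue Q hN
  have hjG : j ∈ G.M := mem_union_left _ (hP ▸ mem_singleton_self j)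
  have hj'G : j' ∈ G.M := mem_union_right _ (hQ ▸ mem_singleton_self j')
  have hd : Disjoint P.M Q.M := by rw [hP, hQ]; exact disjoint_singleton.2 hne
  set A := G.restrict (G.M.erase j') ⟨j, mem_erase.2 ⟨hne, hjG⟩⟩ (erase_subset _ _)
  set B := G.restrict (G.M.erase j) ⟨j', mem_erase.2 ⟨hne.symm, hj'G⟩⟩ (erase_subset _ _)
  have hAM : A.M = P.M := by
    change (P.M ∪ Q.M).erase j' = P.M
    rw [hP, hQ, erase_union_distrib, erase_singleton, union_empty, erase_eq_of_notMem]
    simpa using hne.symm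
  have hBM : B.M = Q.M := by
    change (P.M ∪ Q.M).erase j = Q.M
    rw [hP, hQ, erase_union_distrib, erase_singleton, empty_union, erase_eq_of_notMem]
    simpa using hne
  have hA : ∀ i ∈ P.N, I A i = I P i := hAdd.apply_congr rfl hAM
    fun _ _ _ hj => glue_t_of_mem_left P Q hN (hAM ▸ hj)
  have hB : ∀ i ∈ Q.N, I B i = I Q i := hAdd.apply_congr hN.symm hBM
    fun _ _ _ hj => glue_t_of_mem_right P Q hN hd hj
  calc ∑ i ∈ Q.N, I Q i = ∑ i ∈ B.N, I B i := by
        rw [show B.N = Q.N from hN.symm]; exact (sum_congr rfl hB).symm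
    _ = ∑ i ∈ A.N, I A i := hEGI G B A j hjG j' hj'G hne rfl rfl rfl rfl rfl rfl
    _ = ∑ i ∈ P.N, I P i := sum_congr rfl hA

/-- The value `1` at `N = ∅` is arbitrary (no streaming problem has no artists); it only keeps
`singleUserTotal` positive. -/
noncomputable def singleUserTotal (I : StreamingProblem → ℕ → ℝ) (N : Finset ℕ) : ℝ :=
  if hN : N.Nonempty then ∑ i ∈ N, I (unit N hN 0) i else 1

lemma singleUserTotal_pos (hI : IsIndex I) (N : Finset ℕ) : 0 < singleUserTotal I N := by
  unfold singleUserTotal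
  split_ifs with hN
  · exact (hI _).2
  · exact one_pos

lemma sum_apply_of_M_eq_singleton (hAdd : AdditiveIndex I) (hEGI : EqualGlobalImpactUsers I)
    {P : StreamingProblem} {j : ℕ} (hP : P.M = {j}) :
    ∑ i ∈ P.N, I P i = singleUserTotal I P.N := by
  rw [singleUserTotal, dif_pos P.N_nonempty]
  -- user `j + 1` differs from both `j` and `0`
  calc ∑ i ∈ P.N, I P i = ∑ i ∈ P.N, I (unit P.N P.N_nonempty (j + 1)) i :=
        sum_apply_eq_of_M_eq_singleton hAdd hEGI rfl rfl hP (by omega)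
    _ = ∑ i ∈ P.N, I (unit P.N P.N_nonempty 0) i :=
        sum_apply_eq_of_M_eq_singleton hAdd hEGI rfl rfl rfl (by omega)

/-- Take `C = M` in the lower bound. -/
lemma ReasonableLowerBound.apply_eq_zero (hI : IsIndex I) (hRLB : ReasonableLowerBound I)
    {P : StreamingProblem} {i : ℕ} (hi : i ∈ P.N) (h0 : ∀ j ∈ P.M, P.t i j = 0) : I P i = 0 := by
  set streamed := fun k => ∃ j ∈ P.M, 0 < P.t k j
  have hm : (0 : ℝ) < P.M.card := by exact_mod_cast P.M_nonempty.card_pos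
  have hlb := hRLB P P.M subset_rfl
  rw [le_div_iff₀ (hI P).2, mul_comm, mul_le_mul_iff_left₀ hm,
    ← sum_filter_add_sum_filter_not P.N streamed, add_le_iff_nonpos_right] at hlb
  have hnn : ∀ k ∈ P.N.filter (¬ streamed ·), 0 ≤ I P k := fun k hk =>
    (hI P).1 k (mem_filter.1 hk).1
  refine (sum_eq_zero_iff_of_nonneg hnn).1 (le_antisymm hlb (sum_nonneg hnn)) i
    (mem_filter.2 ⟨hi, ?_⟩)
  rintro ⟨j, hj, hpos⟩
  exact hpos.ne' (h0 j hj)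

section SingleUser

variable (hI : IsIndex I) (hAdd : AdditiveIndex I) (hRLB : ReasonableLowerBound I)
  (hEGI : EqualGlobalImpactUsers I)
include hI hAdd hRLB hEGI

lemma sum_Lset_apply_of_M_eq_singleton {P : StreamingProblem} {j : ℕ} (hP : P.M = {j}) :
    ∑ i ∈ P.Lset j, I P i = singleUserTotal I P.N := by
  rw [← sum_apply_of_M_eq_singleton hAdd hEGI hP]
  refine sum_subset (filter_subset _ _) fun i hi hiL => hRLB.apply_eq_zero hI hi ?_
  rw [hP]
  intro j' hj'
  rw [mem_singleton.1 hj']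
  exact Nat.eq_zero_of_not_pos fun hpos => hiL (mem_filter.2 ⟨hi, hpos⟩)

lemma singleUserTotal_div_card_le_apply (hOP : OrderPreservation I) {P : StreamingProblem}
    {j k : ℕ} (hP : P.M = {j}) (hk : k ∈ P.N) (hmax : ∀ i ∈ P.N, P.t i j ≤ P.t k j) :
    singleUserTotal I P.N / (P.Lset j).card ≤ I P k := by
  rw [div_le_iff₀ (P.card_Lset_pos (hP ▸ mem_singleton_self j)),
    ← sum_Lset_apply_of_M_eq_singleton hI hAdd hRLB hEGI hP]
  calc ∑ i ∈ P.Lset j, I P i ≤ ∑ _i ∈ P.Lset j, I P k :=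
        sum_le_sum fun i hi => hOP P i (mem_filter.1 hi).1 k hk fun j' hj' => by
          rw [hP, mem_singleton] at hj'
          exact hj' ▸ hmax i (mem_filter.1 hi).1
    _ = I P k * (P.Lset j).card := by rw [sum_const, nsmul_eq_mul, mul_comm]

lemma apply_of_M_eq_singleton_of_pos (hOP : OrderPreservation I)
    (hNUM : NonUnilateralManipulability I) {P : StreamingProblem} {j k : ℕ} (hP : P.M = {j})
    (hk : k ∈ P.N) (hpos : 0 < P.t k j) :
    I P k = singleUserTotal I P.N / (P.Lset j).card := by
  set a := singleUserTotal I P.N / (P.Lset j).card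
  have hge : ∀ i ∈ P.Lset j, a ≤ I P i := by
    intro i hi
    obtain ⟨hiN, hipos⟩ := mem_filter.1 hi
    obtain ⟨B, hB⟩ : ∃ B, ∀ i' ∈ P.N, P.t i' j ≤ B := ⟨_, fun i' hi' => le_sup (f := (P.t · j)) hi'⟩
    set P' := P.boost i B
    have hmax : ∀ i' ∈ P'.N, P'.t i' j ≤ P'.t i j := fun i' hi' => by
      have := hB i' hi'
      change (if i' = i then _ else _) ≤ (if i = i then _ else _)
      rw [if_pos rfl]
      split_ifs with h
      · rw [h]
      · omega
    have hall : ∀ j' ∈ P.M, 0 < P.t i j' := fun j' hj' => by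
      rw [hP, mem_singleton] at hj'
      exact hj' ▸ hipos
    calc a = singleUserTotal I P'.N / (P'.Lset j).card := by rw [P.boost_Lset B hipos]; rfl
      _ ≤ I P' i := singleUserTotal_div_card_le_apply hI hAdd hRLB hEGI hOP hP hiN hmax
      _ ≤ I P i := hNUM P P' i hiN rfl rfl (P.boost_Fset B hall).symm
          (fun j' _ => by simp [P', boost])
          (fun k' _ hk' j' _ => by simp [P', boost, hk'])
  have hsum : ∑ _i ∈ P.Lset j, a = ∑ i ∈ P.Lset j, I P i := by
    have hc := P.card_Lset_pos (hP ▸ mem_singleton_self j)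
    rw [sum_Lset_apply_of_M_eq_singleton hI hAdd hRLB hEGI hP, sum_const, nsmul_eq_mul]
    simp only [a]
    field_simp
  exact ((sum_eq_sum_iff_of_le hge).1 hsum k (mem_filter.2 ⟨hk, hpos⟩)).symm

lemma apply_of_M_eq_singleton (hOP : OrderPreservation I) (hNUM : NonUnilateralManipulability I)
    {P : StreamingProblem} {j i : ℕ} (hP : P.M = {j}) (hi : i ∈ P.N) :
    I P i = singleUserTotal I P.N * P.Sh i := by
  rw [P.Sh_of_M_eq_singleton hP, share]
  split_ifs with hpos
  · rw [apply_of_M_eq_singleton_of_pos hI hAdd hRLB hEGI hOP hNUM hP hi hpos, mul_one_div]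
  · rw [mul_zero]
    refine hRLB.apply_eq_zero hI hi fun j' hj' => ?_
    rw [hP, mem_singleton] at hj'
    subst hj'
    omega

end SingleUser

section ScaledShapley

variable {lam : Finset ℕ → ℝ} (hform : ∀ P : StreamingProblem, ∀ i ∈ P.N, I P i = lam P.N * P.Sh i)
include hform

lemma sum_apply_of_eq_mul_Sh (P : StreamingProblem) : ∑ i ∈ P.N, I P i = lam P.N * P.M.card := by
  rw [sum_congr rfl (hform P), ← mul_sum, sum_Sh]

lemma additiveIndex_of_eq_mul_Sh : AdditiveIndex I := by
  intro P P₁ P₂ h₁ h₂ hM hd ht₁ ht₂ i hi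
  rw [hform P i hi, hform P₁ i (h₁ ▸ hi), hform P₂ i (h₂ ▸ hi), Sh_add h₁ h₂ hM hd ht₁ ht₂ hi, h₁,
    h₂, mul_add]

lemma reasonableLowerBound_of_eq_mul_Sh (hlam : ∀ N, 0 < lam N) : ReasonableLowerBound I := by
  intro P C hC
  have hm : (0 : ℝ) < P.M.card := by exact_mod_cast P.M_nonempty.card_pos
  rw [sum_apply_of_eq_mul_Sh hform, sum_congr rfl fun i hi => hform P i (mem_filter.1 hi).1,
    ← mul_sum, mul_right_comm, mul_div_cancel_left₀ _ (mul_pos (hlam _) hm).ne']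
  exact P.card_le_sum_Sh hC

lemma equalGlobalImpactUsers_of_eq_mul_Sh : EqualGlobalImpactUsers I := by
  intro P Q Q' j hj j' hj' _ hQN hQM _ hQ'N hQ'M _
  rw [sum_apply_of_eq_mul_Sh hform, sum_apply_of_eq_mul_Sh hform, hQN, hQ'N, hQM, hQ'M,
    card_erase_of_mem hj, card_erase_of_mem hj']

lemma orderPreservation_of_eq_mul_Sh (hlam : ∀ N, 0 < lam N) : OrderPreservation I := by
  intro P i hi i' hi' hle
  rw [hform P i hi, hform P i' hi']
  exact mul_le_mul_of_nonneg_left (P.Sh_le_Sh hle) (hlam _).le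

lemma nonUnilateralManipulability_of_eq_mul_Sh : NonUnilateralManipulability I := by
  intro P P' i hi hN hM hF _ hother
  rw [hform P i hi, hform P' i (hN ▸ hi), hN, Sh_eq_Sh_of_Fset_eq hi hN hM hF hother]

lemma reward_eq_Sh_of_eq_mul_Sh (hlam : ∀ N, 0 < lam N) (P : StreamingProblem) {i : ℕ}
    (hi : i ∈ P.N) : Reward I P i = P.Sh i := by
  have hm : (0 : ℝ) < P.M.card := by exact_mod_cast P.M_nonempty.card_pos
  have := hlam P.N
  rw [Reward, hform P i hi, sum_apply_of_eq_mul_Sh hform]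
  field_simp

end ScaledShapley

lemma eq_singleUserTotal_mul_Sh (hI : IsIndex I) (hAdd : AdditiveIndex I)
    (hRLB : ReasonableLowerBound I) (hEGI : EqualGlobalImpactUsers I) (hOP : OrderPreservation I)
    (hNUM : NonUnilateralManipulability I) (P : StreamingProblem) :
    ∀ i ∈ P.N, I P i = singleUserTotal I P.N * P.Sh i :=
  hAdd.eq_of_card_M_eq_one (additiveIndex_of_eq_mul_Sh fun _ _ _ => rfl) (fun Q hQ => by
    obtain ⟨j, hj⟩ := card_eq_one.1 hQ
    exact fun i hi => apply_of_M_eq_singleton hI hAdd hRLB hEGI hOP hNUM hj hi) P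

/-- Characterization of the Shapley index. -/
theorem shapley_characterization_3 (I : StreamingProblem → ℕ → ℝ) (hI : IsIndex I) :
    ((AdditiveIndex I ∧ ReasonableLowerBound I ∧ EqualGlobalImpactUsers I ∧ OrderPreservation I ∧ NonUnilateralManipulability I) ↔
      ∃ lam : Finset ℕ → ℝ, (∀ N : Finset ℕ, 0 < lam N) ∧
        ∀ P : StreamingProblem, ∀ i ∈ P.N, I P i = lam P.N * P.Sh i) ∧
    ((AdditiveIndex I ∧ ReasonableLowerBound I ∧ EqualGlobalImpactUsers I ∧ OrderPreservation I ∧ NonUnilateralManipulability I) →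
      ∀ P : StreamingProblem, ∀ i ∈ P.N, Reward I P i = P.Sh i) := by
  have characterize : AdditiveIndex I ∧ ReasonableLowerBound I ∧ EqualGlobalImpactUsers I ∧
      OrderPreservation I ∧ NonUnilateralManipulability I →
      ∃ lam : Finset ℕ → ℝ, (∀ N, 0 < lam N) ∧
        ∀ P : StreamingProblem, ∀ i ∈ P.N, I P i = lam P.N * P.Sh i :=
    fun ⟨hAdd, hRLB, hEGI, hOP, hNUM⟩ => ⟨singleUserTotal I, singleUserTotal_pos hI,
      eq_singleUserTotal_mul_Sh hI hAdd hRLB hEGI hOP hNUM⟩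
  refine ⟨⟨characterize, fun ⟨lam, hlam, hform⟩ => ⟨additiveIndex_of_eq_mul_Sh hform,
    reasonableLowerBound_of_eq_mul_Sh hform hlam, equalGlobalImpactUsers_of_eq_mul_Sh hform,
    orderPreservation_of_eq_mul_Sh hform hlam, nonUnilateralManipulability_of_eq_mul_Sh hform⟩⟩,
    fun h P i hi => ?_⟩
  obtain ⟨lam, hlam, hform⟩ := characterize h
  exact reward_eq_Sh_of_eq_mul_Sh hform hlam P hi
end

section
/- The Shapley index satisfies reasonable lower bound: for every streaming problem (N, M, t) and every set of users C ⊆ M, writing L^C = ⋃_{j∈C} L^j, it holds that Σ_{i∈L^C} Sh_i(N, M, t) ≥ |C|. -/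
open Finset

/-!
Each user `j` spreads exactly one unit evenly over `L^j`, and for `j ∈ C` all of `L^j` lies in
`L^C`. Exchanging the order of summation, `∑_{i ∈ L^C} Sh_i` therefore collects the full unit
of every user in `C` (and possibly more from users outside `C`).
-/

namespace StreamingProblem

variable (P : StreamingProblem)

theorem lset_nonempty {j : ℕ} (hj : j ∈ P.M) : (P.Lset j).Nonempty := by
  obtain ⟨i, hi, hti⟩ := exists_ne_zero_of_sum_ne_zero (P.streams_pos j hj).ne'
  exact ⟨i, mem_filter.mpr ⟨hi, Nat.pos_of_ne_zero hti⟩⟩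

theorem sum_lset_inv_card {j : ℕ} (hj : j ∈ P.M) :
    ∑ _i ∈ P.Lset j, (1 : ℝ) / (P.Lset j).card = 1 := by
  rw [sum_const, nsmul_eq_mul, mul_one_div, div_self]
  exact Nat.cast_ne_zero.mpr (P.lset_nonempty hj).card_ne_zero

theorem sum_filter_le_sh {C : Finset ℕ} (hC : C ⊆ P.M) (i : ℕ) :
    ∑ j ∈ C.filter (fun j => 0 < P.t i j), (1 : ℝ) / (P.Lset j).card ≤ P.Sh i :=
  sum_le_sum_of_subset_of_nonneg (filter_subset_filter _ hC) fun _ _ _ => by positivity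

end StreamingProblem

open StreamingProblem

/-- The Shapley index satisfies the reasonable lower bound: for every set of users
`C ⊆ M`, the artists in `L^C = ⋃_{j ∈ C} L^j` jointly receive at least `|C|`. -/
theorem shapley_reasonable_lower_bound (P : StreamingProblem) (C : Finset ℕ) (hC : C ⊆ P.M) :
    (C.card : ℝ) ≤ ∑ i ∈ P.N.filter (fun i => ∃ j ∈ C, 0 < P.t i j), P.Sh i := by
  calc (C.card : ℝ)
      = ∑ j ∈ C, ∑ _i ∈ P.Lset j, (1 : ℝ) / (P.Lset j).card := by
        rw [sum_congr rfl fun j hj => P.sum_lset_inv_card (hC hj)]; simp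
    _ = ∑ i ∈ P.N.filter (fun i => ∃ j ∈ C, 0 < P.t i j),
          ∑ j ∈ C.filter (fun j => 0 < P.t i j), (1 : ℝ) / (P.Lset j).card := by
        refine sum_comm' fun j i => ?_
        simp only [Lset, mem_filter]
        exact ⟨fun ⟨hj, hi, hpos⟩ => ⟨⟨hj, hpos⟩, hi, j, hj, hpos⟩,
          fun ⟨⟨hj, hpos⟩, hi, _⟩ => ⟨hj, hi, hpos⟩⟩
    _ ≤ _ := sum_le_sum fun i _ => P.sum_filter_le_sh hC i
end
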